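/- Let n > 2 be an integer and let T be the set of subsets X of the integer interval (n/2, n) such that for some x ∈ X, both x and x+1 belong to X ∪ {n}. Then for every X ∈ T, the monoid S generated by X ∪ {n} is a numerical semigroup with set of primitives exactly X ∪ {n}, maximum primitive n, and primitive depth ⌈max P(S)/min P(S)⌉ equal to 2. In particular |T| ≤ A_n. -/

import Mathlib

/-- A numerical semigroup: a cofinite additive submonoid of ℕ containing 0. -/
structure NumericalSemigroup where
  carrier : Set ℕ
  zero_mem : 0 ∈ carrier
  add_mem : ∀ ⦃a b : ℕ⦄, a ∈ carrier → b ∈ carrier → a + b ∈ carrier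
  cofinite : (carrierᶜ : Set ℕ).Finite

namespace NumericalSemigroup

/-- The primitives (minimal generators): nonzero elements not expressible as a sum
of two nonzero elements. -/
def primitives (S : NumericalSemigroup) : Set ℕ :=
  {x | x ∈ S.carrier ∧ x ≠ 0 ∧
    ¬ ∃ a b : ℕ, a ∈ S.carrier ∧ b ∈ S.carrier ∧ a ≠ 0 ∧ b ≠ 0 ∧ x = a + b}

/-- The maximum primitive. -/
noncomputable def maxPrim (S : NumericalSemigroup) : ℕ := sSup (primitives S)

/-- The multiplicity: the least primitive (= least nonzero element). -/
noncomputable def multiplicity (S : NumericalSemigroup) : ℕ := sInf (primitives S)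

/-- The Frobenius number: the largest gap (0 for ℕ by convention here). -/
noncomputable def frob (S : NumericalSemigroup) : ℕ := sSup (S.carrierᶜ)

/-- The set of left elements. -/
noncomputable def lefts (S : NumericalSemigroup) : Set ℕ := S.carrier ∩ Set.Iio (frob S)

/-- The extended set of left elements. -/
noncomputable def extLefts (S : NumericalSemigroup) : Set ℕ := lefts S ∪ {frob S}

end NumericalSemigroup

open NumericalSemigroup

/-- The gcd of a set of naturals: the greatest common divisor of all its elements. -/
noncomputable def setGcd (A : Set ℕ) : ℕ := sSup {d | ∀ x ∈ A, d ∣ x}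

/-- The number of numerical semigroups with maximum primitive `n`. -/
noncomputable def countMaxPrim (n : ℕ) : ℕ :=
  {S : NumericalSemigroup | maxPrim S = n}.ncard

/-- The number of numerical semigroups with Frobenius number `n`. -/
noncomputable def countFrob (n : ℕ) : ℕ :=
  {S : NumericalSemigroup | frob S = n}.ncard


lemma ns_ext {S T : NumericalSemigroup} (h : S.carrier = T.carrier) : S = T := by
  cases S; cases T; simp_all

lemma primitives_bddAbove (S : NumericalSemigroup) : BddAbove (primitives S) := by
  have hB : BddAbove S.carrierᶜ := S.cofinite.bddAbove
  set K := sSup S.carrierᶜ with hK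
  have hmem : ∀ m, K < m → m ∈ S.carrier := by
    intro m hm
    by_contra h
    exact absurd (le_csSup hB h) (not_le.2 hm)
  refine ⟨2*K+2, fun p hp => ?_⟩
  by_contra hlt
  push_neg at hlt
  exact hp.2.2 ⟨K+1, p - (K+1), hmem _ (by omega), hmem _ (by omega), by omega, by omega, by omega⟩

lemma carrier_eq_closure (S : NumericalSemigroup) :
    S.carrier = (AddSubmonoid.closure (primitives S) : Set ℕ) := by
  have fwd : ∀ m, m ∈ S.carrier → m ∈ AddSubmonoid.closure (primitives S) := by
    intro m
    induction m using Nat.strong_induction_on with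
    | _ m ih =>
      intro hm
      rcases eq_or_ne m 0 with rfl | h0
      · exact zero_mem _
      by_cases hp : m ∈ primitives S
      · exact AddSubmonoid.subset_closure hp
      · have : ∃ a b, a ∈ S.carrier ∧ b ∈ S.carrier ∧ a ≠ 0 ∧ b ≠ 0 ∧ m = a + b := by
          by_contra h
          exact hp ⟨hm, h0, h⟩
        obtain ⟨a, b, ha, hb, ha0, hb0, rfl⟩ := this
        exact add_mem (ih a (by omega) ha) (ih b (by omega) hb)
  apply Set.eq_of_subset_of_subset fwd
  intro m hm
  induction hm using AddSubmonoid.closure_induction with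
  | mem x hx => exact hx.1
  | zero => exact S.zero_mem
  | add a b _ _ iha ihb => exact S.add_mem iha ihb

lemma build_lemma (n : ℕ) (hn : 2 < n) (X : Set ℕ) (hX : X ⊆ {x : ℕ | n < 2 * x ∧ x < n})
    (hx : ∃ x ∈ X, x + 1 ∈ X ∨ x + 1 = n) :
    ∃ S : NumericalSemigroup,
      S.carrier = (AddSubmonoid.closure (X ∪ {n}) : Set ℕ) ∧
      primitives S = X ∪ {n} ∧ maxPrim S = n ∧
      ⌈(maxPrim S : ℚ) / (multiplicity S : ℚ)⌉ = 2 := by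
  set G : Set ℕ := X ∪ {n} with hGdef
  have hG : ∀ g ∈ G, n < 2*g ∧ g ≤ n := by
    rintro g (hg | hg)
    · exact ⟨(hX hg).1, le_of_lt (hX hg).2⟩
    · rcases hg with rfl; omega
  obtain ⟨x, hxX, hx1⟩ := hx
  have hxn : n < 2*x ∧ x < n := hX hxX
  have hxG : x ∈ G := Or.inl hxX
  have hx1G : x + 1 ∈ G := by
    rcases hx1 with h | h
    · exact Or.inl h
    · exact Or.inr (by simp [h])
  have hx2 : 2 ≤ x := by omega
  have hbig : ∀ m, x*x ≤ m → m ∈ AddSubmonoid.closure G := by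
    intro m hm
    set q := m / x with hq
    set r := m % x with hr
    have hrx : r < x := Nat.mod_lt _ (by omega)
    have hqx : x ≤ q := (Nat.le_div_iff_mul_le (by omega)).2 hm
    have hmod : x * q + r = m := Nat.div_add_mod m x
    obtain ⟨d, hd⟩ : ∃ d, q = r + d := ⟨q - r, by omega⟩
    have hrep : d * x + r * (x+1) = m := by
      have h' : d * x + r * (x+1) = x * (r + d) + r := by ring
      rw [h', ← hd, hmod]
    have hmem : d • x + r • (x+1) ∈ AddSubmonoid.closure G :=
      add_mem (nsmul_mem (AddSubmonoid.subset_closure hxG) d)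
        (nsmul_mem (AddSubmonoid.subset_closure hx1G) r)
    simpa [smul_eq_mul, hrep] using hmem
  have hcof : ((AddSubmonoid.closure G : Set ℕ)ᶜ).Finite := by
    apply Set.Finite.subset (Set.finite_Iio (x*x))
    intro m hm
    by_contra h
    exact hm (hbig m (by simpa using h))
  set S : NumericalSemigroup :=
    ⟨(AddSubmonoid.closure G : Set ℕ), zero_mem _, fun a b ha hb => add_mem ha hb, hcof⟩
    with hSdef
  have hpos : ∀ m ∈ S.carrier, m = 0 ∨ n < 2*m := by
    intro m hm
    induction hm using AddSubmonoid.closure_induction with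
    | mem g hg => exact Or.inr (hG g hg).1
    | zero => exact Or.inl rfl
    | add a b _ _ iha ihb => rcases iha with rfl | h <;> rcases ihb with rfl | h' <;> omega
  have hdecomp : ∀ m ∈ S.carrier, m = 0 ∨ m ∈ G ∨
      ∃ a b : ℕ, a ∈ S.carrier ∧ b ∈ S.carrier ∧ a ≠ 0 ∧ b ≠ 0 ∧ m = a + b := by
    intro m hm
    induction hm using AddSubmonoid.closure_induction with
    | mem g hg => exact Or.inr (Or.inl hg)
    | zero => exact Or.inl rfl
    | add a b ha hb iha ihb =>
      rcases eq_or_ne a 0 with rfl | ha0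
      · simpa using ihb
      rcases eq_or_ne b 0 with rfl | hb0
      · simpa using iha
      exact Or.inr (Or.inr ⟨a, b, ha, hb, ha0, hb0, rfl⟩)
  have hGne : ∀ g ∈ G, g ≠ 0 := fun g hg => by have := (hG g hg).1; omega
  have hprim : primitives S = G := by
    ext p
    constructor
    · rintro ⟨hp, hp0, hpn⟩
      rcases hdecomp p hp with rfl | h | h
      · exact absurd rfl hp0
      · exact h
      · exact absurd h hpn
    · intro hg
      refine ⟨AddSubmonoid.subset_closure hg, hGne p hg, ?_⟩
      rintro ⟨a, b, ha, hb, ha0, hb0, hab⟩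
      have Ha := hpos a ha
      have Hb := hpos b hb
      have h1 := (hG _ hg).1
      have h2 := (hG _ hg).2
      omega
  have hnG : n ∈ G := Or.inr rfl
  have hbdd : BddAbove G := ⟨n, fun g hg => (hG g hg).2⟩
  have hmax : maxPrim S = n := by
    rw [maxPrim, hprim]
    exact le_antisymm (csSup_le ⟨n, hnG⟩ fun g hg => (hG g hg).2) (le_csSup hbdd hnG)
  refine ⟨S, rfl, hprim, hmax, ?_⟩
  rw [hmax, NumericalSemigroup.multiplicity, hprim]
  set m := sInf G with hm
  have hmG : m ∈ G := Nat.sInf_mem ⟨n, hnG⟩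
  have hmx : m ≤ x := Nat.sInf_le hxG
  have h1 : n < 2*m := (hG m hmG).1
  have h2 : m < n := by omega
  have hm0 : (0:ℚ) < m := by exact_mod_cast (by omega : 0 < m)
  rw [Int.ceil_eq_iff]
  constructor
  · push_cast
    rw [lt_div_iff₀ hm0]
    have : (m:ℚ) < n := by exact_mod_cast h2
    linarith
  · rw [div_le_iff₀ hm0]
    have : (n:ℚ) < 2*m := by exact_mod_cast h1
    push_cast
    linarith

theorem T_subsets_give_semigroups (n : ℕ) (hn : 2 < n) :
    (∀ X : Set ℕ, X ⊆ {x : ℕ | n < 2 * x ∧ x < n} →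
      (∃ x ∈ X, x + 1 ∈ X ∨ x + 1 = n) →
      ∃ S : NumericalSemigroup,
        S.carrier = (AddSubmonoid.closure (X ∪ {n}) : Set ℕ) ∧
        primitives S = X ∪ {n} ∧
        maxPrim S = n ∧
        ⌈(maxPrim S : ℚ) / (multiplicity S : ℚ)⌉ = 2) ∧
    {X : Set ℕ | X ⊆ {x : ℕ | n < 2 * x ∧ x < n} ∧
        ∃ x ∈ X, x + 1 ∈ X ∨ x + 1 = n}.ncard ≤ countMaxPrim n := by
  refine ⟨fun X hX hx => build_lemma n hn X hX hx, ?_⟩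
  classical
  set T : Set (Set ℕ) := {X : Set ℕ | X ⊆ {x : ℕ | n < 2 * x ∧ x < n} ∧
      ∃ x ∈ X, x + 1 ∈ X ∨ x + 1 = n} with hT
  set tgt : Set NumericalSemigroup := {S : NumericalSemigroup | maxPrim S = n} with htgt
  -- target is finite
  have htgtsub : ∀ S ∈ tgt, primitives S ⊆ Set.Iic n := by
    intro S hS p hp
    have h : p ≤ maxPrim S := le_csSup (primitives_bddAbove S) hp
    rw [hS] at h
    exact h
  have hinjprim : Set.InjOn primitives tgt := by
    intro S1 h1 S2 h2 heq
    apply ns_ext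
    rw [carrier_eq_closure S1, carrier_eq_closure S2, heq]
  have htgtfin : tgt.Finite := by
    apply Set.Finite.of_finite_image _ hinjprim
    apply Set.Finite.subset ((Set.finite_Iic n).finite_subsets)
    rintro A ⟨S, hS, rfl⟩
    exact htgtsub S hS
  -- the map
  let f : Set ℕ → NumericalSemigroup := fun X =>
    if h : X ∈ T then Classical.choose (build_lemma n hn X h.1 h.2)
    else ⟨Set.univ, trivial, fun _ _ _ _ => trivial, by simp⟩
  have hf : ∀ X (h : X ∈ T), primitives (f X) = X ∪ {n} ∧ maxPrim (f X) = n := by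
    intro X h
    have := Classical.choose_spec (build_lemma n hn X h.1 h.2)
    simp only [f, dif_pos h]
    exact ⟨this.2.1, this.2.2.1⟩
  apply Set.ncard_le_ncard_of_injOn f _ _ htgtfin
  · intro X hXT
    exact (hf X hXT).2
  · intro X hXT Y hYT heq
    have h1 := (hf X hXT).1
    have h2 := (hf Y hYT).1
    rw [heq, h2] at h1
    ext a
    constructor
    · intro ha
      have haX : a ∈ X ∪ {n} := Or.inl ha
      rw [← h1] at haX
      rcases haX with h | h
      · exact h
      · exact absurd h (by have := (hXT.1 ha).2; simp; omega)
    · intro ha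
      have haY : a ∈ Y ∪ {n} := Or.inl ha
      rw [h1] at haY
      rcases haY with h | h
      · exact h
      · exact absurd h (by have := (hYT.1 ha).2; simp; omega)
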